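/- arXiv:2205.13077 — 8 statements merged into one kernel-verified Lean document; each statement's English description precedes it below -/
import Mathlib

section
/- Let (S, F) be an independence system on a finite set S with a sequential order, in which every singleton is feasible. If two distinct objects x, y ∈ S satisfy rank(x) = rank(y), then x does not rely on y and y does not rely on x. -/
open Finset

lemma rank_lt_of_relies {S : Type*} [DecidableEq S] (F : Finset S → Prop) (I : S → ℕ)
    (rank : S → ℕ)
    (hrank : ∀ x : S, IsGreatest
      {n : ℕ | ∃ E : Finset S, F E ∧ x ∈ E ∧ (∀ y ∈ E, I y ≤ I x) ∧ E.card = n} (rank x))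
    {a b : S} (hlt : I a < I b)
    (hins : ∀ E : Finset S, F E → a ∈ E → (∀ z ∈ E, I z ≤ I a) → F (insert b E)) :
    rank a < rank b := by
  obtain ⟨⟨E, hFE, haE, hle, hcard⟩, -⟩ := hrank a
  have hbE : b ∉ E := fun hb => (hle b hb).not_gt hlt
  have hbelow : ∀ z ∈ insert b E, I z ≤ I b :=
    (forall_mem_insert _ _ _).2 ⟨le_rfl, fun z hz => (hle z hz).trans hlt.le⟩
  exact (hrank b).2
    ⟨insert b E, hins E hFE haE hle, mem_insert_self b E, hbelow,
      by rw [card_insert_of_notMem hbE, hcard]⟩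

theorem stmt_0_general {S : Type*} [DecidableEq S]
    (F : Finset S → Prop)
    (I : S → ℕ)
    (rank : S → ℕ)
    (hrank : ∀ x : S, IsGreatest
      {n : ℕ | ∃ E : Finset S, F E ∧ x ∈ E ∧ (∀ y ∈ E, I y ≤ I x) ∧ E.card = n} (rank x))
    (relies : S → S → Prop)
    -- `relies y x` means: y relies on x
    (hrelies : ∀ y x : S, relies y x ↔
      (I x < I y ∧ ∀ E : Finset S, F E → x ∈ E → (∀ z ∈ E, I z ≤ I x) → F (insert y E)))
    (x y : S) (hr : rank x = rank y) :
    ¬ relies x y ∧ ¬ relies y x := by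
  refine ⟨fun h => ?_, fun h => ?_⟩
  · obtain ⟨hlt, hins⟩ := (hrelies x y).1 h
    exact (rank_lt_of_relies F I rank hrank hlt hins).ne' hr
  · obtain ⟨hlt, hins⟩ := (hrelies y x).1 h
    exact (rank_lt_of_relies F I rank hrank hlt hins).ne hr

/-- In an independence system with a sequential order in which every
singleton is feasible, two distinct objects with equal rank cannot rely on each other. -/
theorem stmt_0 {S : Type*} [Fintype S] [DecidableEq S]
    (F : Finset S → Prop)
    (hempty : F ∅)
    (hhered : ∀ E E' : Finset S, E' ⊆ E → F E → F E')
    (hsingle : ∀ x : S, F {x})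
    (I : S → ℕ) (hI : Function.Injective I)
    (rank : S → ℕ)
    (hrank : ∀ x : S, IsGreatest
      {n : ℕ | ∃ E : Finset S, F E ∧ x ∈ E ∧ (∀ y ∈ E, I y ≤ I x) ∧ E.card = n} (rank x))
    (relies : S → S → Prop)
    -- `relies y x` means: y relies on x
    (hrelies : ∀ y x : S, relies y x ↔
      (I x < I y ∧ ∀ E : Finset S, F E → x ∈ E → (∀ z ∈ E, I z ≤ I x) → F (insert y E)))
    (x y : S) (hxy : x ≠ y) (hr : rank x = rank y) :
    ¬ relies x y ∧ ¬ relies y x :=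
  stmt_0_general F I rank hrank relies hrelies x y hr
end

section
/- Let (S, F) be an independence system on a finite set S with a sequential order, in which every singleton is feasible. If y relies on x, then rank(y) ≥ rank(x) + 1. In particular, rank is strictly increasing along every edge of the dependence graph. -/
open Finset

theorem stmt_1_general {S : Type*} [DecidableEq S]
    (F : Finset S → Prop)
    (I : S → ℕ)
    (rank : S → ℕ)
    (hrank : ∀ x : S, IsGreatest
      {n : ℕ | ∃ E : Finset S, F E ∧ x ∈ E ∧ (∀ y ∈ E, I y ≤ I x) ∧ E.card = n} (rank x))
    (relies : S → S → Prop)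
    -- `relies y x` means: y relies on x
    (hrelies : ∀ y x : S, relies y x ↔
      (I x < I y ∧ ∀ E : Finset S, F E → x ∈ E → (∀ z ∈ E, I z ≤ I x) → F (insert y E)))
    (x y : S) (h : relies y x) :
    rank x + 1 ≤ rank y := by
  obtain ⟨hxy, hextend⟩ := (hrelies y x).1 h
  obtain ⟨E, hE, hxE, hEx, hcard⟩ := (hrank x).1
  have hyE : y ∉ E := fun hy => (hEx y hy).not_gt hxy
  have hEy : ∀ z ∈ insert y E, I z ≤ I y :=
    (forall_mem_insert _ _ _).2 ⟨le_rfl, fun z hz => (hEx z hz).trans hxy.le⟩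
  rw [← hcard, ← card_insert_of_notMem hyE]
  exact (hrank y).2 ⟨insert y E, hextend E hE hxE hEx, mem_insert_self y E, hEy, rfl⟩

/-- In an independence system with a sequential order in which every
singleton is feasible, if y relies on x then rank(y) ≥ rank(x) + 1. -/
theorem stmt_1 {S : Type*} [Fintype S] [DecidableEq S]
    (F : Finset S → Prop)
    (hempty : F ∅)
    (hhered : ∀ E E' : Finset S, E' ⊆ E → F E → F E')
    (hsingle : ∀ x : S, F {x})
    (I : S → ℕ) (hI : Function.Injective I)
    (rank : S → ℕ)
    (hrank : ∀ x : S, IsGreatest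
      {n : ℕ | ∃ E : Finset S, F E ∧ x ∈ E ∧ (∀ y ∈ E, I y ≤ I x) ∧ E.card = n} (rank x))
    (relies : S → S → Prop)
    -- `relies y x` means: y relies on x
    (hrelies : ∀ y x : S, relies y x ↔
      (I x < I y ∧ ∀ E : Finset S, F E → x ∈ E → (∀ z ∈ E, I z ≤ I x) → F (insert y E)))
    (x y : S) (h : relies y x) :
    rank x + 1 ≤ rank y :=
  stmt_1_general F I rank hrank relies hrelies x y h
end

section
/- Consider a finite set of activities. (i) Every activity that overlaps the activity with the minimum end time has rank 1. (ii) For every k ≥ 1: if the set S' of activities with rank greater than k is nonempty and A_j is the activity in S' with the minimum end time, then every activity in S' that overlaps A_j has rank exactly k + 1. -/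
/-!
Removing `A_x` from a largest compatible set ending at `A_x` leaves a compatible set ending at
its last element `A_{x'}`, where `x' < x` and `e_{x'} ≤ s_x`; hence `rank x ≤ rank x' + 1`.
(i) An activity overlapping the first one has no compatible predecessor, so its rank is 1.
(ii) If `rank i ≥ k + 2`, its predecessor `x'` has rank `> k`, so `e_j ≤ e_{x'} ≤ s_i`,
and `A_i` would be compatible with `A_j`.
-/

section Rank

variable {ι : Type*} [LinearOrder ι]

def compatCards (Compat : ι → ι → Prop) (x : ι) : Set ℕ :=
  {m | ∃ T : Finset ι, x ∈ T ∧ (∀ i ∈ T, i ≤ x) ∧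
    (∀ i ∈ T, ∀ j ∈ T, i ≠ j → Compat i j) ∧ T.card = m}

variable {Compat : ι → ι → Prop} {rank : ι → ℕ}

lemma rank_eq_one_of_forall_lt_not_compat {x : ι} (hx_mem : rank x ∈ compatCards Compat x)
    (hx : ∀ i < x, ¬ Compat i x) : rank x = 1 := by
  obtain ⟨T, hxT, hle, hcomp, hcard⟩ := hx_mem
  have hT : T = {x} := Finset.eq_singleton_iff_unique_mem.2 ⟨hxT, fun i hi => by
    by_contra hne
    exact hx i (lt_of_le_of_ne (hle i hi) hne) (hcomp i hi x hxT hne)⟩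
  rw [← hcard, hT, Finset.card_singleton]

lemma exists_compat_lt_of_two_le_rank (hrank : ∀ x, IsGreatest (compatCards Compat x) (rank x))
    {i : ι} (hi : 2 ≤ rank i) : ∃ i' < i, Compat i' i ∧ rank i ≤ rank i' + 1 := by
  obtain ⟨T, hiT, hle, hcomp, hcard⟩ := (hrank i).1
  have hne : (T.erase i).Nonempty := by
    rw [← Finset.card_pos, Finset.card_erase_of_mem hiT]
    omega
  set i' := (T.erase i).max' hne
  have hi'_mem : i' ∈ T.erase i := Finset.max'_mem _ _
  obtain ⟨hi'i, hi'T⟩ := Finset.mem_erase.1 hi'_mem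
  refine ⟨i', lt_of_le_of_ne (hle i' hi'T) hi'i, hcomp i' hi'T i hiT hi'i, ?_⟩
  have hle' : (T.erase i).card ≤ rank i' := (hrank i').2
    ⟨T.erase i, hi'_mem, fun a ha => (T.erase i).le_max' a ha,
      fun a ha b hb => hcomp a (Finset.mem_of_mem_erase ha) b (Finset.mem_of_mem_erase hb), rfl⟩
  rw [Finset.card_erase_of_mem hiT] at hle'
  omega

end Rank

section Intervals

variable {ι α : Type*} [LinearOrder ι] [LinearOrder α] {s e : ι → α} {Compat : ι → ι → Prop}

lemma compat_comm (hCompat : ∀ i j, Compat i j ↔ ((i < j ∧ e i ≤ s j) ∨ (j < i ∧ e j ≤ s i)))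
    (i j : ι) : Compat i j ↔ Compat j i := by
  rw [hCompat, hCompat, or_comm]

lemma compat_iff_of_lt (hCompat : ∀ i j, Compat i j ↔ ((i < j ∧ e i ≤ s j) ∨ (j < i ∧ e j ≤ s i)))
    {i j : ι} (hij : i < j) : Compat i j ↔ e i ≤ s j := by
  simp [hCompat, hij, hij.not_gt]

lemma forall_lt_not_compat_of_not_compat_bot
    (hCompat : ∀ i j, Compat i j ↔ ((i < j ∧ e i ≤ s j) ∨ (j < i ∧ e j ≤ s i)))
    (hmono : Monotone e) {i₀ x : ι} (hi₀ : ∀ i, i₀ ≤ i) (hx : ¬ Compat x i₀) :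
    ∀ i < x, ¬ Compat i x := by
  intro i hix hix_compat
  rw [compat_comm hCompat, compat_iff_of_lt hCompat ((hi₀ i).trans_lt hix)] at hx
  rw [compat_iff_of_lt hCompat hix] at hix_compat
  exact hx ((hmono (hi₀ i)).trans hix_compat)

lemma rank_le_succ_of_not_compat
    (hCompat : ∀ i j, Compat i j ↔ ((i < j ∧ e i ≤ s j) ∨ (j < i ∧ e j ≤ s i)))
    (hse : ∀ i, s i < e i) (hmono : StrictMono e) {rank : ι → ℕ}
    (hrank : ∀ x, IsGreatest (compatCards Compat x) (rank x)) {k : ℕ} {i j : ι}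
    (hjmin : ∀ i, k < rank i → e j ≤ e i) (hij : ¬ Compat i j) : rank i ≤ k + 1 := by
  by_contra! hlt
  obtain ⟨i', hi'i, hi'_compat, hrank_le⟩ := exists_compat_lt_of_two_le_rank hrank (i := i) (by omega)
  rw [compat_iff_of_lt hCompat hi'i] at hi'_compat
  have hji : e j ≤ s i := (hjmin i' (by omega)).trans hi'_compat
  have hj_lt : j < i := hmono.lt_iff_lt.1 (hji.trans_lt (hse i))
  rw [compat_comm hCompat, compat_iff_of_lt hCompat hj_lt] at hij
  exact hij hji

end Intervals

/-- (i) Every activity overlapping the minimum-end-time activity has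
rank 1.  (ii) For k ≥ 1, if A_j is the minimum-end-time activity among those of rank
greater than k, then every activity of rank greater than k overlapping A_j has rank
exactly k + 1. -/
theorem stmt_3 {n : ℕ} (hn : 0 < n) (s e : Fin n → ℝ)
    (hse : ∀ i, s i < e i) (hmono : StrictMono e)
    (Compat : Fin n → Fin n → Prop)
    (hCompat : ∀ i j, Compat i j ↔ ((i < j ∧ e i ≤ s j) ∨ (j < i ∧ e j ≤ s i)))
    (rank : Fin n → ℕ)
    (hrank : ∀ x, IsGreatest {m : ℕ | ∃ T : Finset (Fin n), x ∈ T ∧ (∀ i ∈ T, i ≤ x) ∧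
        (∀ i ∈ T, ∀ j ∈ T, i ≠ j → Compat i j) ∧ T.card = m} (rank x)) :
    -- (i): index ⟨0, hn⟩ is the activity with minimum end time (e is strictly increasing)
    (∀ x : Fin n, ¬ Compat x ⟨0, hn⟩ → rank x = 1) ∧
    -- (ii)
    (∀ k : ℕ, 1 ≤ k → ∀ j : Fin n, k < rank j → (∀ i : Fin n, k < rank i → e j ≤ e i) →
      ∀ i : Fin n, k < rank i → ¬ Compat i j → rank i = k + 1) := by
  refine ⟨fun x hx => ?_, fun k _ j _ hjmin i hi hij => ?_⟩
  · have hbot : ∀ i : Fin n, (⟨0, hn⟩ : Fin n) ≤ i := fun i => Nat.zero_le i.val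
    exact rank_eq_one_of_forall_lt_not_compat (hrank x).1
      (forall_lt_not_compat_of_not_compat_bot hCompat hmono.monotone hbot hx)
  · exact le_antisymm (rank_le_succ_of_not_compat hCompat hse hmono hrank hjmin hij) hi
end

section
/- Consider a finite set of activities and an activity A_x such that the set P = {A_i : e_i ≤ s_x} of activities ending no later than A_x starts is nonempty. Let A_p ∈ P be an activity with the maximum start time among P (the pivot activity of A_x). Then rank(A_x) = rank(A_p) + 1. -/
/-!
Every activity of a compatible set whose last activity is `p` ends by `e p ≤ s x`, so an optimal
such set extends by `x`. Conversely, in an optimal compatible set whose last activity is `x`, all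
other activities end by `s x`; the last of them, `j`, lies in `P` and so starts no later than `p`,
and the remaining ones end by `s j ≤ s p`. Trading `j` and `x` for `p` gives a compatible set
whose last activity is `p`, one element smaller.
-/

namespace ActivitySelection

open Finset

variable {ι : Type*} [LinearOrder ι] {s e : ι → ℝ} {Compat : ι → ι → Prop}

def compatCardsEndingAt (Compat : ι → ι → Prop) (x : ι) : Set ℕ :=
  {m | ∃ T : Finset ι, x ∈ T ∧ (∀ i ∈ T, i ≤ x) ∧
    (∀ i ∈ T, ∀ j ∈ T, i ≠ j → Compat i j) ∧ T.card = m}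

lemma lt_of_end_le_start (hse : ∀ i, s i < e i) (hmono : StrictMono e) {i j : ι}
    (h : e i ≤ s j) : i < j :=
  hmono.lt_iff_lt.1 (h.trans_lt (hse j))

lemma end_le_start_of_compat_of_lt
    (hCompat : ∀ i j, Compat i j ↔ ((i < j ∧ e i ≤ s j) ∨ (j < i ∧ e j ≤ s i)))
    {i j : ι} (hij : i < j) (h : Compat i j) : e i ≤ s j := by
  rcases (hCompat i j).1 h with ⟨_, h⟩ | ⟨hji, _⟩
  · exact h
  · exact absurd hij hji.not_gt

lemma end_le_start_of_mem_erase
    (hCompat : ∀ i j, Compat i j ↔ ((i < j ∧ e i ≤ s j) ∨ (j < i ∧ e j ≤ s i)))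
    {T : Finset ι} {x : ι} (hT : (T : Set ι).Pairwise Compat) (hx : x ∈ T)
    (hle : ∀ i ∈ T, i ≤ x) {i : ι} (hi : i ∈ T.erase x) : e i ≤ s x := by
  obtain ⟨hne, hiT⟩ := mem_erase.1 hi
  exact end_le_start_of_compat_of_lt hCompat ((hle i hiT).lt_of_ne hne) (hT hiT hx hne)

lemma card_add_one_mem_compatCardsEndingAt (hse : ∀ i, s i < e i) (hmono : StrictMono e)
    (hCompat : ∀ i j, Compat i j ↔ ((i < j ∧ e i ≤ s j) ∨ (j < i ∧ e j ≤ s i)))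
    {y : ι} {V : Finset ι} (hV : (V : Set ι).Pairwise Compat) (hVy : ∀ i ∈ V, e i ≤ s y) :
    V.card + 1 ∈ compatCardsEndingAt Compat y := by
  have hlt : ∀ i ∈ V, i < y := fun i hi => lt_of_end_le_start hse hmono (hVy i hi)
  have hpair : ((insert y V : Finset ι) : Set ι).Pairwise Compat := by
    rw [coe_insert, Set.pairwise_insert]
    refine ⟨hV, fun i hi _ => ⟨(hCompat y i).2 (Or.inr ⟨hlt i hi, hVy i hi⟩),
      (hCompat i y).2 (Or.inl ⟨hlt i hi, hVy i hi⟩)⟩⟩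
  refine ⟨insert y V, mem_insert_self y V, fun i hi => ?_, fun i hi j hj => hpair hi hj,
    card_insert_of_notMem fun hy => (hlt y hy).false⟩
  rcases mem_insert.1 hi with rfl | hi
  exacts [le_rfl, (hlt i hi).le]

lemma card_mem_compatCardsEndingAt_of_start_max'_le (hse : ∀ i, s i < e i)
    (hmono : StrictMono e)
    (hCompat : ∀ i j, Compat i j ↔ ((i < j ∧ e i ≤ s j) ∨ (j < i ∧ e j ≤ s i)))
    {p : ι} {W : Finset ι} (hW : (W : Set ι).Pairwise Compat) (hne : W.Nonempty)
    (hstart : s (W.max' hne) ≤ s p) : W.card ∈ compatCardsEndingAt Compat p := by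
  have hV : ∀ i ∈ W.erase (W.max' hne), e i ≤ s p := fun i hi =>
    (end_le_start_of_mem_erase hCompat hW (W.max'_mem hne) (W.le_max' · ·) hi).trans hstart
  have := card_add_one_mem_compatCardsEndingAt hse hmono hCompat
    (Set.Pairwise.mono (coe_subset.2 (erase_subset _ W)) hW) hV
  rwa [card_erase_add_one (W.max'_mem hne)] at this

end ActivitySelection

open ActivitySelection Finset in
/-- If the set P of activities ending no later than A_x starts is
nonempty and A_p is an activity of P with maximum start time (the pivot of A_x),
then rank(A_x) = rank(A_p) + 1. -/
theorem stmt_4 {n : ℕ} (s e : Fin n → ℝ)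
    (hse : ∀ i, s i < e i) (hmono : StrictMono e)
    (Compat : Fin n → Fin n → Prop)
    (hCompat : ∀ i j, Compat i j ↔ ((i < j ∧ e i ≤ s j) ∨ (j < i ∧ e j ≤ s i)))
    (rank : Fin n → ℕ)
    (hrank : ∀ x, IsGreatest {m : ℕ | ∃ T : Finset (Fin n), x ∈ T ∧ (∀ i ∈ T, i ≤ x) ∧
        (∀ i ∈ T, ∀ j ∈ T, i ≠ j → Compat i j) ∧ T.card = m} (rank x))
    (x p : Fin n)
    (hp : e p ≤ s x)                              -- p ∈ P, so P is nonempty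
    (hpmax : ∀ i : Fin n, e i ≤ s x → s i ≤ s p)  -- p has the maximum start time in P
    : rank x = rank p + 1 := by
  obtain ⟨⟨T, hxT, hTle, hTc, hTcard⟩, hx_ub⟩ := hrank x
  obtain ⟨⟨U, -, hUle, hUc, hUcard⟩, hp_ub⟩ := hrank p
  apply le_antisymm
  · rw [← hTcard, ← card_erase_add_one hxT, add_le_add_iff_right]
    rcases (T.erase x).eq_empty_or_nonempty with hW | hW
    · simp [hW]
    have hWc : ((T.erase x : Finset _) : Set _).Pairwise Compat :=
      Set.Pairwise.mono (coe_subset.2 (erase_subset x T)) hTc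
    have hlast_start := hpmax _ (end_le_start_of_mem_erase hCompat hTc hxT hTle (max'_mem _ hW))
    exact hp_ub (card_mem_compatCardsEndingAt_of_start_max'_le hse hmono hCompat hWc hW
      hlast_start)
  · have hUx : ∀ i ∈ U, e i ≤ s x := fun i hi => (hmono.monotone (hUle i hi)).trans hp
    exact hUcard ▸ hx_ub (card_add_one_mem_compatCardsEndingAt hse hmono hCompat hUc hUx)
end

section
/- Consider a finite set of activities. For an activity A_x, if no activity ends at or before s_x then rank(A_x) = 1; otherwise rank(A_x) = 1 + rank(pivot(A_x)). Consequently, defining the pivot chain of A_x as the sequence A_x, pivot(A_x), pivot(pivot(A_x)), … iterated until reaching an activity with no activity ending at or before its start time, rank(A_x) equals the number of activities on this chain; i.e., the rank of each activity is its depth in the pivot forest in which each activity's parent is its pivot. -/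
/-!
A maximum schedule ending at `x` can be assumed to have the pivot `p` of `x` as its
second-to-last activity: if `m` is the actual second-to-last one, then `e m ≤ s x`, so
`s m ≤ s p` by maximality of the pivot, and every earlier activity, which ends before `s m`,
also ends before `s p`. Exchanging `m` for `p` therefore turns the schedule minus `x` into a
schedule ending at `p` of the same size, whence `rank x = rank p + 1`. Since the pivot of `x`
precedes `x`, induction along the pivot chain identifies the rank with the depth.
-/

namespace ActivitySelection

variable {ι α : Type*} [LinearOrder ι] [LinearOrder α] {s e : ι → α} {x p : ι} {T : Finset ι}

structure IsScheduleTo (s e : ι → α) (x : ι) (T : Finset ι) : Prop where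
  mem : x ∈ T
  le : ∀ i ∈ T, i ≤ x
  compat : ∀ i ∈ T, ∀ j ∈ T, i < j → e i ≤ s j

/-- The rank of `x` is the greatest element of this set. -/
def scheduleCards (s e : ι → α) (x : ι) : Set ℕ :=
  {m | ∃ T, IsScheduleTo s e x T ∧ T.card = m}

theorem isScheduleTo_singleton (s e : ι → α) (x : ι) : IsScheduleTo s e x {x} where
  mem := Finset.mem_singleton_self x
  le i hi := (Finset.mem_singleton.1 hi).le
  compat i hi j hj hij := by
    rw [Finset.mem_singleton] at hi hj
    exact absurd (hi.trans hj.symm) hij.ne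

theorem IsScheduleTo.end_le_start (hT : IsScheduleTo s e x T) {i : ι} (hi : i ∈ T)
    (hix : i ≠ x) : e i ≤ s x :=
  hT.compat i hi x hT.mem (lt_of_le_of_ne (hT.le i hi) hix)

theorem IsScheduleTo.eq_singleton (hT : IsScheduleTo s e x T) (hx : ¬ ∃ i, e i ≤ s x) :
    T = {x} :=
  Finset.eq_singleton_iff_unique_mem.2
    ⟨hT.mem, fun i hi => by_contra fun hix => hx ⟨i, hT.end_le_start hi hix⟩⟩

theorem IsScheduleTo.extend (hT : IsScheduleTo s e p T) (hmono : Monotone e)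
    (hpx : p < x) (hp : e p ≤ s x) : IsScheduleTo s e x (insert x T) := by
  have hle : ∀ i ∈ insert x T, i ≤ x := by
    intro i hi
    rcases Finset.mem_insert.1 hi with rfl | hi
    · exact le_rfl
    · exact ((hT.le i hi).trans_lt hpx).le
  refine ⟨Finset.mem_insert_self x T, hle, fun i hi j hj hij => ?_⟩
  have hiT : i ∈ T := (Finset.mem_insert.1 hi).resolve_left (hij.trans_le (hle j hj)).ne
  rcases Finset.mem_insert.1 hj with rfl | hj
  · exact (hmono (hT.le i hiT)).trans hp
  · exact hT.compat i hiT j hj hij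

theorem IsScheduleTo.exists_erase (hT : IsScheduleTo s e x T) (hne : T ≠ {x}) :
    ∃ m, IsScheduleTo s e m (T.erase x) ∧ e m ≤ s x := by
  have hnonempty : (T.erase x).Nonempty := by
    rw [Finset.nonempty_iff_ne_empty, Ne, Finset.erase_eq_empty_iff]
    exact not_or.2 ⟨Finset.ne_empty_of_mem hT.mem, hne⟩
  set m := (T.erase x).max' hnonempty
  have hm : m ∈ T.erase x := Finset.max'_mem _ _
  refine ⟨m, ⟨hm, fun i hi => Finset.le_max' _ i hi, fun i hi j hj =>
    hT.compat i (Finset.mem_of_mem_erase hi) j (Finset.mem_of_mem_erase hj)⟩, ?_⟩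
  exact hT.end_le_start (Finset.mem_of_mem_erase hm) (Finset.ne_of_mem_erase hm)

theorem IsScheduleTo.exchange {m : ι} {U : Finset ι} (hU : IsScheduleTo s e m U)
    (hmono : Monotone e) (hsm : s m ≤ s p) (hp : s p < e p) :
    IsScheduleTo s e p (insert p (U.erase m)) ∧ (insert p (U.erase m)).card = U.card := by
  have hbefore : ∀ i ∈ U.erase m, e i ≤ s p ∧ i < p := by
    intro i hi
    have hei : e i ≤ s p :=
      (hU.end_le_start (Finset.mem_of_mem_erase hi) (Finset.ne_of_mem_erase hi)).trans hsm
    exact ⟨hei, hmono.reflect_lt (hei.trans_lt hp)⟩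
  have hle : ∀ i ∈ insert p (U.erase m), i ≤ p := by
    intro i hi
    rcases Finset.mem_insert.1 hi with rfl | hi
    · exact le_rfl
    · exact (hbefore i hi).2.le
  refine ⟨⟨Finset.mem_insert_self p _, hle, fun i hi j hj hij => ?_⟩, ?_⟩
  · have hiU : i ∈ U.erase m :=
      (Finset.mem_insert.1 hi).resolve_left (hij.trans_le (hle j hj)).ne
    rcases Finset.mem_insert.1 hj with rfl | hj
    · exact (hbefore i hiU).1
    · exact hU.compat i (Finset.mem_of_mem_erase hiU) j (Finset.mem_of_mem_erase hj) hij
  · have hpU : p ∉ U.erase m := fun h => (hbefore p h).2.false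
    rw [Finset.card_insert_of_notMem hpU, Finset.card_erase_add_one hU.mem]

theorem forall_compat_iff {Compat : ι → ι → Prop}
    (hCompat : ∀ i j, Compat i j ↔ ((i < j ∧ e i ≤ s j) ∨ (j < i ∧ e j ≤ s i))) :
    (∀ i ∈ T, ∀ j ∈ T, i ≠ j → Compat i j) ↔ ∀ i ∈ T, ∀ j ∈ T, i < j → e i ≤ s j := by
  constructor
  · intro h i hi j hj hij
    rcases (hCompat i j).1 (h i hi j hj hij.ne) with ⟨_, hle⟩ | ⟨hji, _⟩
    · exact hle
    · exact absurd hji hij.not_gt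
  · intro h i hi j hj hij
    rcases hij.lt_or_gt with hij | hji
    · exact (hCompat i j).2 (Or.inl ⟨hij, h i hi j hj hij⟩)
    · exact (hCompat i j).2 (Or.inr ⟨hji, h j hj i hi hji⟩)

theorem scheduleCards_eq_of_compat {Compat : ι → ι → Prop}
    (hCompat : ∀ i j, Compat i j ↔ ((i < j ∧ e i ≤ s j) ∨ (j < i ∧ e j ≤ s i))) (x : ι) :
    {m : ℕ | ∃ T : Finset ι, x ∈ T ∧ (∀ i ∈ T, i ≤ x) ∧
      (∀ i ∈ T, ∀ j ∈ T, i ≠ j → Compat i j) ∧ T.card = m} = scheduleCards s e x := by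
  ext m
  simp only [scheduleCards, Set.mem_ofPred_eq, forall_compat_iff hCompat]
  exact exists_congr fun T => ⟨fun ⟨hx, hle, hc, hm⟩ => ⟨⟨hx, hle, hc⟩, hm⟩,
    fun ⟨⟨hx, hle, hc⟩, hm⟩ => ⟨hx, hle, hc, hm⟩⟩

theorem scheduleCards_eq_singleton (hx : ¬ ∃ i, e i ≤ s x) : scheduleCards s e x = {1} := by
  ext k
  constructor
  · rintro ⟨T, hT, rfl⟩
    rw [hT.eq_singleton hx, Finset.card_singleton, Set.mem_singleton_iff]
  · rintro rfl
    exact ⟨{x}, isScheduleTo_singleton s e x, Finset.card_singleton x⟩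

theorem isGreatest_scheduleCards_of_pivot (hse : ∀ i, s i < e i) (hmono : Monotone e)
    (hpx : e p ≤ s x) (hpmax : ∀ i, e i ≤ s x → s i ≤ s p) {r : ℕ}
    (hr : IsGreatest (scheduleCards s e p) r) : IsGreatest (scheduleCards s e x) (r + 1) := by
  have hplt : p < x := hmono.reflect_lt (hpx.trans_lt (hse x))
  constructor
  · obtain ⟨T, hT, rfl⟩ := hr.1
    have hxT : x ∉ T := fun h => (hT.le x h).not_gt hplt
    exact ⟨insert x T, hT.extend hmono hplt hpx, Finset.card_insert_of_notMem hxT⟩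
  · rintro _ ⟨T, hT, rfl⟩
    by_cases hsingle : T = {x}
    · simp [hsingle]
    obtain ⟨m, hU, hm⟩ := hT.exists_erase hsingle
    obtain ⟨hV, hcard⟩ := hU.exchange hmono (hpmax m hm) (hse p)
    have := hr.2 ⟨_, hV, rfl⟩
    rw [← Finset.card_erase_add_one hT.mem]
    omega

end ActivitySelection

/-- rank(A_x) = 1 if no activity ends at or before s_x, and otherwise
rank(A_x) = 1 + rank(pivot(A_x)); consequently rank(A_x) equals the depth of A_x in
the pivot forest (the number of activities on the pivot chain of A_x). -/
theorem stmt_5 {n : ℕ} (s e : Fin n → ℝ)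
    (hse : ∀ i, s i < e i) (hmono : StrictMono e)
    (Compat : Fin n → Fin n → Prop)
    (hCompat : ∀ i j, Compat i j ↔ ((i < j ∧ e i ≤ s j) ∨ (j < i ∧ e j ≤ s i)))
    (rank : Fin n → ℕ)
    (hrank : ∀ x, IsGreatest {m : ℕ | ∃ T : Finset (Fin n), x ∈ T ∧ (∀ i ∈ T, i ≤ x) ∧
        (∀ i ∈ T, ∀ j ∈ T, i ≠ j → Compat i j) ∧ T.card = m} (rank x))
    (pivot : Fin n → Fin n)
    -- whenever some activity ends no later than `s x`, `pivot x` is such an activity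
    -- with the maximum start time
    (hpivot : ∀ x : Fin n, (∃ i, e i ≤ s x) →
      e (pivot x) ≤ s x ∧ ∀ i : Fin n, e i ≤ s x → s i ≤ s (pivot x))
    -- `depth x` is the number of activities on the pivot chain of x, i.e. the depth
    -- of x in the pivot forest (each activity's parent is its pivot)
    (depth : Fin n → ℕ)
    (hdepth1 : ∀ x : Fin n, (¬ ∃ i, e i ≤ s x) → depth x = 1)
    (hdepth2 : ∀ x : Fin n, (∃ i, e i ≤ s x) → depth x = depth (pivot x) + 1) :
    (∀ x : Fin n, (¬ ∃ i, e i ≤ s x) → rank x = 1) ∧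
    (∀ x : Fin n, (∃ i, e i ≤ s x) → rank x = 1 + rank (pivot x)) ∧
    (∀ x : Fin n, rank x = depth x) := by
  have hgreatest : ∀ x, IsGreatest (ActivitySelection.scheduleCards s e x) (rank x) := fun x =>
    ActivitySelection.scheduleCards_eq_of_compat hCompat x ▸ hrank x
  have hbase : ∀ x, (¬ ∃ i, e i ≤ s x) → rank x = 1 := fun x hx =>
    (hgreatest x).unique (ActivitySelection.scheduleCards_eq_singleton hx ▸ isGreatest_singleton)
  have hstep : ∀ x, (∃ i, e i ≤ s x) → rank x = 1 + rank (pivot x) := fun x hx => by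
    obtain ⟨hpx, hpmax⟩ := hpivot x hx
    rw [add_comm]
    exact (hgreatest x).unique <| ActivitySelection.isGreatest_scheduleCards_of_pivot
      hse hmono.monotone hpx hpmax (hgreatest (pivot x))
  refine ⟨hbase, hstep, fun x => ?_⟩
  induction x using WellFoundedLT.induction with
  | _ x ih =>
    by_cases hx : ∃ i, e i ≤ s x
    · have hlt : pivot x < x := hmono.lt_iff_lt.1 ((hpivot x hx).1.trans_lt (hse x))
      rw [hstep x hx, hdepth2 x hx, ih _ hlt, add_comm]
    · rw [hbase x hx, hdepth1 x hx]
end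

section
/- Let G be a finite simple graph with an injective priority function π : V → ℕ, and let M be the greedy maximal independent set, defined by well-founded recursion on decreasing priority: v ∈ M if and only if every neighbor u of v with π(u) > π(v) satisfies u ∉ M. Consider the round-based parallel process: starting with all vertices undecided, in each round select every undecided vertex whose priority is greater than the priorities of all of its undecided neighbors, and then mark the selected vertices and all their neighbors as decided. Then M is a maximal independent set of G, and the union over all rounds of the selected vertices equals M. -/
/-!
Independence and maximality of `M` are read off the fixed-point equation directly. For the
rounds, the invariant is that every decided vertex of `M` was selected in an earlier round: then a
vertex selected in round `r` has no higher-priority neighbour in `M` (such a neighbour is either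
undecided, hence of lower priority, or was selected earlier and would have decided it), so it lies
in `M`. Conversely the decided sets increase and therefore stabilise, and once they stabilise
everything is decided, because the undecided vertex of highest priority is always selected.
-/

namespace GreedyMIS

def IsFixedPoint {V : Type*} (G : SimpleGraph V) (π : V → ℕ) (M : Set V) : Prop :=
  ∀ v : V, v ∈ M ↔ ∀ u : V, G.Adj v u → π v < π u → u ∉ M

structure IsGreedyRounds {V : Type*} (G : SimpleGraph V) (π : V → ℕ)
    (selected decided : ℕ → Set V) : Prop where
  selected_eq : ∀ r : ℕ, selected r =
    {v : V | v ∉ decided r ∧ ∀ u : V, G.Adj v u → u ∉ decided r → π u < π v}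
  decided_succ : ∀ r : ℕ, decided (r + 1) =
    decided r ∪ selected r ∪ {u : V | ∃ v ∈ selected r, G.Adj v u}

variable {V : Type*} {G : SimpleGraph V} {π : V → ℕ} {M : Set V}
  {selected decided : ℕ → Set V}

namespace IsFixedPoint

theorem not_adj (hM : IsFixedPoint G π M) (hπ : Function.Injective π) :
    ∀ v ∈ M, ∀ u ∈ M, ¬ G.Adj v u := by
  intro v hv u hu hvu
  rcases (hπ.ne (G.ne_of_adj hvu)).lt_or_gt with h | h
  · exact (hM v).1 hv u hvu h hu
  · exact (hM u).1 hu v hvu.symm h hv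

theorem exists_adj_mem (hM : IsFixedPoint G π M) {v : V} (hv : v ∉ M) :
    ∃ u ∈ M, G.Adj v u := by
  by_contra! h
  exact hv ((hM v).2 fun u hvu _ hu => h u hu hvu)

end IsFixedPoint

namespace IsGreedyRounds

theorem monotone (h : IsGreedyRounds G π selected decided) : Monotone decided :=
  monotone_nat_of_le_succ fun r => by
    rw [h.decided_succ r]
    exact Set.subset_union_left.trans Set.subset_union_left

theorem mem_decided_succ_of_mem_selected (h : IsGreedyRounds G π selected decided) {r : ℕ}
    {v : V} (hv : v ∈ selected r) : v ∈ decided (r + 1) := by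
  rw [h.decided_succ]
  exact Or.inl (Or.inr hv)

theorem mem_decided_succ_of_adj (h : IsGreedyRounds G π selected decided) {r : ℕ} {v u : V}
    (hv : v ∈ selected r) (hvu : G.Adj v u) : u ∈ decided (r + 1) := by
  rw [h.decided_succ]
  exact Or.inr ⟨v, hv, hvu⟩

theorem exists_decided_eq_univ [Finite V] (h : IsGreedyRounds G π selected decided)
    (hπ : Function.Injective π) : ∃ n, decided n = Set.univ := by
  obtain ⟨n, hn⟩ := WellFoundedGT.monotone_chain_condition ⟨decided, h.monotone⟩
  refine ⟨n, Set.eq_univ_of_forall fun w => by_contra fun hw => ?_⟩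
  obtain ⟨v, hv, hmax⟩ := Set.exists_max_image (decided n)ᶜ π (Set.toFinite _) ⟨w, hw⟩
  have hsel : v ∈ selected n := by
    rw [h.selected_eq]
    exact ⟨hv, fun u hvu hu => (hmax u hu).lt_of_ne (hπ.ne (G.ne_of_adj hvu).symm)⟩
  have hstable : decided n = decided (n + 1) := hn (n + 1) n.le_succ
  exact hv (hstable ▸ h.mem_decided_succ_of_mem_selected hsel)

theorem selected_subset (h : IsGreedyRounds G π selected decided) (hM : IsFixedPoint G π M)
    {r : ℕ} (hr : ∀ u ∈ decided r ∩ M, ∃ r' < r, u ∈ selected r') : selected r ⊆ M := by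
  intro v hv
  rw [h.selected_eq] at hv
  obtain ⟨hvd, hvmax⟩ := hv
  refine (hM v).2 fun u hvu hlt hu => ?_
  by_cases hud : u ∈ decided r
  · obtain ⟨r', hr', hu'⟩ := hr u ⟨hud, hu⟩
    exact hvd (h.monotone hr' (h.mem_decided_succ_of_adj hu' hvu.symm))
  · exact (hvmax u hvu hud).asymm hlt

theorem exists_lt_mem_selected (h : IsGreedyRounds G π selected decided)
    (hM : IsFixedPoint G π M) (hπ : Function.Injective π) (h0 : decided 0 = ∅) :
    ∀ r, ∀ u ∈ decided r ∩ M, ∃ r' < r, u ∈ selected r'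
  | 0 => by simp [h0]
  | r + 1 => by
    rintro u ⟨hud, huM⟩
    have ih := h.exists_lt_mem_selected hM hπ h0 r
    rw [h.decided_succ] at hud
    rcases hud with (hud | hus) | ⟨v, hvs, hvu⟩
    · obtain ⟨r', hr', hu'⟩ := ih u ⟨hud, huM⟩
      exact ⟨r', hr'.trans r.lt_succ_self, hu'⟩
    · exact ⟨r, r.lt_succ_self, hus⟩
    · exact absurd hvu (hM.not_adj hπ v (h.selected_subset hM ih hvs) u huM)

end IsGreedyRounds

end GreedyMIS

open GreedyMIS in
/-- Let M be the greedy MIS (v ∈ M iff no higher-priority neighbor of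
v is in M).  Consider the round-based process: in each round select every undecided
vertex whose priority exceeds the priorities of all its undecided neighbors, then
mark the selected vertices and their neighbors as decided.  Then M is a maximal
independent set, and the union over all rounds of the selected vertices equals M. -/
theorem stmt_11 {V : Type*} [Fintype V] (G : SimpleGraph V)
    (π : V → ℕ) (hπ : Function.Injective π)
    (M : Set V)
    (hM : ∀ v : V, v ∈ M ↔ ∀ u : V, G.Adj v u → π v < π u → u ∉ M)
    (selected decided : ℕ → Set V)
    (hdec0 : decided 0 = ∅)
    (hsel : ∀ r : ℕ, selected r =
      {v : V | v ∉ decided r ∧ ∀ u : V, G.Adj v u → u ∉ decided r → π u < π v})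
    (hdec : ∀ r : ℕ, decided (r + 1) =
      decided r ∪ selected r ∪ {u : V | ∃ v ∈ selected r, G.Adj v u}) :
    (∀ v ∈ M, ∀ u ∈ M, ¬ G.Adj v u) ∧
    (∀ v : V, v ∉ M → ∃ u ∈ M, G.Adj v u) ∧
    (⋃ r : ℕ, selected r) = M := by
  have hfix : IsFixedPoint G π M := hM
  have hrounds : IsGreedyRounds G π selected decided := ⟨hsel, hdec⟩
  have hinv := hrounds.exists_lt_mem_selected hfix hπ hdec0
  obtain ⟨n, hn⟩ := hrounds.exists_decided_eq_univ hπ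
  refine ⟨hfix.not_adj hπ, fun v => hfix.exists_adj_mem, ?_⟩
  refine (Set.iUnion_subset fun r => hrounds.selected_subset hfix (hinv r)).antisymm
    fun v hv => ?_
  obtain ⟨r, -, hr⟩ := hinv n v ⟨hn ▸ Set.mem_univ v, hv⟩
  exact Set.mem_iUnion.2 ⟨r, hr⟩
end

section
/- Let G be a finite simple graph with an injective priority function π : V → ℕ. For a vertex v, define D(v) as the maximum length (number of vertices) of a path u_1, u_2, …, u_k = v in G with strictly decreasing priorities π(u_1) > π(u_2) > ⋯ > π(u_k). In the round-based greedy MIS process — in each round select every undecided vertex whose priority exceeds that of all its undecided neighbors, and mark the selected vertices and their neighbors as decided — every vertex v is decided (selected or removed) no later than round D(v). Consequently the process terminates after at most max_v D(v) rounds, the length of the longest monotone-priority path in G. -/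
/-!
A vertex `v` that is still undecided after round `r` and is not selected in it has an undecided
neighbour `u` of higher priority. Appending `v` to a longest decreasing path ending at `u` gives
`D u < D v`, so by induction on `r` every vertex `v` with `D v ≤ r` is decided after round `r`.
-/

theorem List.IsChain.concat_of_getLast? {α : Type*} {R : α → α → Prop} {l : List α} {a b : α}
    (hl : l.IsChain R) (ha : l.getLast? = some a) (hab : R a b) : (l ++ [b]).IsChain R :=
  hl.append (.singleton b) (by simp [ha, hab])

namespace GreedyMIS

variable {V : Type*} (G : SimpleGraph V) (π : V → ℕ)

def decreasingPathLengths (v : V) : Set ℕ :=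
  {k : ℕ | ∃ l : List V, l.IsChain G.Adj ∧
    l.IsChain (fun x y => π y < π x) ∧ l.getLast? = some v ∧ l.length = k}

variable {G π}

theorem one_mem_decreasingPathLengths (v : V) : 1 ∈ decreasingPathLengths G π v :=
  ⟨[v], .singleton v, .singleton v, rfl, rfl⟩

theorem succ_mem_decreasingPathLengths {u v : V} {k : ℕ} (hk : k ∈ decreasingPathLengths G π u)
    (huv : G.Adj u v) (hπuv : π v < π u) : k + 1 ∈ decreasingPathLengths G π v := by
  obtain ⟨l, hadj, hdecr, hlast, rfl⟩ := hk
  exact ⟨l ++ [v], hadj.concat_of_getLast? hlast huv, hdecr.concat_of_getLast? hlast hπuv,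
    by simp, by simp⟩

theorem lt_of_isGreatest_decreasingPathLengths {u v : V} {du dv : ℕ}
    (hu : IsGreatest (decreasingPathLengths G π u) du)
    (hv : IsGreatest (decreasingPathLengths G π v) dv)
    (huv : G.Adj u v) (hπuv : π v < π u) : du < dv :=
  hv.2 (succ_mem_decreasingPathLengths hu.1 huv hπuv)

variable {selected decided : ℕ → Set V}

theorem exists_adj_undecided_lt (hπ : Function.Injective π) {r : ℕ}
    (hsel : selected r =
      {v : V | v ∉ decided r ∧ ∀ u : V, G.Adj v u → u ∉ decided r → π u < π v})
    {v : V} (hvd : v ∉ decided r) (hvs : v ∉ selected r) :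
    ∃ u, G.Adj v u ∧ u ∉ decided r ∧ π v < π u := by
  simp only [hsel, Set.mem_ofPred_eq, not_and, not_forall, not_lt] at hvs
  obtain ⟨u, hvu, hud, hπle⟩ := hvs hvd
  exact ⟨u, hvu, hud, hπle.lt_of_ne fun h => hvu.ne (hπ h)⟩

theorem mem_decided_of_le (hπ : Function.Injective π)
    (hsel : ∀ r : ℕ, selected r =
      {v : V | v ∉ decided r ∧ ∀ u : V, G.Adj v u → u ∉ decided r → π u < π v})
    (hdec : ∀ r : ℕ, decided r ∪ selected r ⊆ decided (r + 1))
    (f : V → ℕ) (hf_pos : ∀ v, 0 < f v) (hf_lt : ∀ u v, G.Adj u v → π v < π u → f u < f v) :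
    ∀ r v, f v ≤ r → v ∈ decided r := by
  intro r
  induction r with
  | zero => exact fun v hv => absurd hv (hf_pos v).not_ge
  | succ r ih =>
    intro v hv
    by_cases hvd : v ∈ decided r
    · exact hdec r (.inl hvd)
    by_cases hvs : v ∈ selected r
    · exact hdec r (.inr hvs)
    obtain ⟨u, hvu, hud, hπvu⟩ := exists_adj_undecided_lt hπ (hsel r) hvd hvs
    exact absurd (ih u (Nat.lt_succ_iff.mp ((hf_lt u v hvu.symm hπvu).trans_le hv))) hud

end GreedyMIS

open GreedyMIS in
theorem stmt_12_general {V : Type*} (G : SimpleGraph V)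
    (π : V → ℕ) (hπ : Function.Injective π)
    (selected decided : ℕ → Set V)
    (hsel : ∀ r : ℕ, selected r =
      {v : V | v ∉ decided r ∧ ∀ u : V, G.Adj v u → u ∉ decided r → π u < π v})
    (hdec : ∀ r : ℕ, decided (r + 1) =
      decided r ∪ selected r ∪ {u : V | ∃ v ∈ selected r, G.Adj v u})
    (D : V → ℕ)
    (hD : ∀ v : V, IsGreatest
      {k : ℕ | ∃ l : List V, List.Chain' G.Adj l ∧
        List.Chain' (fun x y => π y < π x) l ∧ l.getLast? = some v ∧ l.length = k}
      (D v)) :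
    (∀ v : V, v ∈ decided (D v)) ∧
    (∀ r : ℕ, (∀ v : V, D v ≤ r) → decided r = Set.univ) := by
  have hdecided : ∀ r v, D v ≤ r → v ∈ decided r :=
    mem_decided_of_le hπ hsel (fun r => hdec r ▸ Set.subset_union_left) D
      (fun v => (hD v).2 (one_mem_decreasingPathLengths v))
      (fun u v huv hπuv => lt_of_isGreatest_decreasingPathLengths (hD u) (hD v) huv hπuv)
  exact ⟨fun v => hdecided _ v le_rfl,
    fun r hr => Set.eq_univ_of_forall fun v => hdecided r v (hr v)⟩

/-- With D(v) the maximum number of vertices on a path ending at v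
with strictly decreasing priorities, every vertex v is decided no later than round
D(v) in the round-based greedy MIS process; consequently the process terminates
after at most max_v D(v) rounds. -/
theorem stmt_12 {V : Type*} [Fintype V] (G : SimpleGraph V)
    (π : V → ℕ) (hπ : Function.Injective π)
    (selected decided : ℕ → Set V)
    (hdec0 : decided 0 = ∅)
    (hsel : ∀ r : ℕ, selected r =
      {v : V | v ∉ decided r ∧ ∀ u : V, G.Adj v u → u ∉ decided r → π u < π v})
    (hdec : ∀ r : ℕ, decided (r + 1) =
      decided r ∪ selected r ∪ {u : V | ∃ v ∈ selected r, G.Adj v u})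
    (D : V → ℕ)
    (hD : ∀ v : V, IsGreatest
      {k : ℕ | ∃ l : List V, List.Chain' G.Adj l ∧
        List.Chain' (fun x y => π y < π x) l ∧ l.getLast? = some v ∧ l.length = k}
      (D v)) :
    (∀ v : V, v ∈ decided (D v)) ∧
    (∀ r : ℕ, (∀ v : V, D v ≤ r) → decided r = Set.univ) :=
  stmt_12_general G π hπ selected decided hsel hdec D hD
end

section
/- Let s be a finite multiset of at least three nonnegative real numbers. Let a be a minimum element of s and b a minimum element of s with a removed (so a ≤ b are the two smallest elements), and let s' be the multiset obtained from s by removing a and b and inserting a + b (one Huffman merge step). Let c ≤ d be the two smallest elements of s'. Then a + b ≤ c + d. Consequently, in the Huffman tree construction process — repeatedly remove the two smallest frequencies and insert their sum — the sequence of created sums is nondecreasing, so once the sum of the current two smallest frequencies is f_m, no element of frequency smaller than f_m is ever created later. -/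
/-!
If one of `c`, `d` is at least `a + b`, the other one is nonnegative and we are done. Otherwise
neither is the merged element `a + b`, so both survive from `s.erase a`, where `b` is minimal;
hence `c + d ≥ b + b ≥ a + b`.
-/

theorem le_of_mem_cons_erase_of_lt {α : Type*} [Preorder α] [DecidableEq α] {m b x : α}
    {t : Multiset α} (hb : ∀ y ∈ t, b ≤ y) (hx : x ∈ m ::ₘ t.erase b) (hlt : x < m) : b ≤ x :=
  hb x (Multiset.mem_of_mem_erase ((Multiset.mem_cons.1 hx).resolve_left hlt.ne))

theorem stmt_13_general (s : Multiset ℝ)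
    (hpos : ∀ x ∈ s, (0 : ℝ) ≤ x)
    (a b c d : ℝ)
    (ha : a ∈ s ∧ ∀ x ∈ s, a ≤ x)
    (hb : b ∈ s.erase a ∧ ∀ x ∈ s.erase a, b ≤ x)
    (s' : Multiset ℝ) (hs' : s' = (a + b) ::ₘ ((s.erase a).erase b))
    (hc : c ∈ s' ∧ ∀ x ∈ s', c ≤ x)
    (hd : d ∈ s'.erase c ∧ ∀ x ∈ s'.erase c, d ≤ x) :
    a + b ≤ c + d := by
  subst hs'
  have hb_mem : b ∈ s := Multiset.mem_of_mem_erase hb.1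
  have hd_mem := Multiset.mem_of_mem_erase hd.1
  have hab : a ≤ b := ha.2 b hb_mem
  have hnonneg : ∀ x ∈ (a + b) ::ₘ (s.erase a).erase b, 0 ≤ x :=
    Multiset.forall_mem_cons.2 ⟨add_nonneg (hpos a ha.1) (hpos b hb_mem),
      fun x hx ↦ hpos x (Multiset.mem_of_mem_erase (Multiset.mem_of_mem_erase hx))⟩
  rcases le_or_gt (a + b) c with hc_large | hc_small
  · linarith [hnonneg d hd_mem]
  rcases le_or_gt (a + b) d with hd_large | hd_small
  · linarith [hnonneg c hc.1]
  have hbc : b ≤ c := le_of_mem_cons_erase_of_lt hb.2 hc.1 hc_small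
  have hbd : b ≤ d := le_of_mem_cons_erase_of_lt hb.2 hd_mem hd_small
  linarith

/-- One Huffman merge step: if a ≤ b are the two smallest elements of
a multiset s of at least three nonnegative reals, s' is obtained from s by removing
a and b and inserting a + b, and c ≤ d are the two smallest elements of s', then
a + b ≤ c + d; hence the sequence of created sums in Huffman tree construction is
nondecreasing. -/
theorem stmt_13 (s : Multiset ℝ) (hcard : 3 ≤ Multiset.card s)
    (hpos : ∀ x ∈ s, (0 : ℝ) ≤ x)
    (a b c d : ℝ)
    (ha : a ∈ s ∧ ∀ x ∈ s, a ≤ x)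
    (hb : b ∈ s.erase a ∧ ∀ x ∈ s.erase a, b ≤ x)
    (s' : Multiset ℝ) (hs' : s' = (a + b) ::ₘ ((s.erase a).erase b))
    (hc : c ∈ s' ∧ ∀ x ∈ s', c ≤ x)
    (hd : d ∈ s'.erase c ∧ ∀ x ∈ s'.erase c, d ≤ x) :
    a + b ≤ c + d :=
  stmt_13_general s hpos a b c d ha hb s' hs' hc hd
end
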